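/- arXiv:math/0411237 — 4 statements merged into one kernel-verified Lean document; each statement's English description precedes it below -/
import Mathlib

section
/- Every 𝔞-invariant asymptotically abelian state φ of 𝔅 is even, i.e., φ ∘ 𝔰 = φ (equivalently, φ vanishes on the odd part 𝔅_−). -/
/-!
For an odd element `A` and a finite set `S ⊂ ℤ^d`, put `b = ∑_{x ∈ S} 𝔞_x A`. Invariance gives
`φ b = #S · φ A`, and the Cauchy–Schwarz inequality for states gives
`#S² |φ A|² ≤ φ(b* b) ≤ φ(b* b) + φ(b b*) = ∑_{x, y ∈ S} φ(𝔞_{y-x}(A) A* + A* 𝔞_{y-x}(A))`.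
Since `A` and `A*` are both odd, asymptotic abelianness makes the summand tend to `0` as
`|y - x| → ∞`, so the right-hand side is `o(#S²)` and `φ A = 0`. Applied to the odd element
`A - 𝔰 A` this gives `φ ∘ 𝔰 = φ`.
-/

open Filter MeasureTheory Topology
open scoped ComplexOrder

/-- The box `Λ_N = {0, …, N−1}^d ⊂ ℤ^d`. -/
noncomputable def box (d N : ℕ) : Finset (Fin d → ℤ) := Finset.Icc 0 (fun _ => (N : ℤ) - 1)

/-- A state on a unital C*-algebra: a positive unital continuous linear functional. -/
def IsState {F : Type*} [NormedRing F] [StarRing F] [NormedAlgebra ℂ F]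
    (φ : F →L[ℂ] ℂ) : Prop :=
  φ 1 = 1 ∧ ∀ A, 0 ≤ φ (star A * A)

/-- A bounded measurable (`L^∞`) complex-valued function. -/
def IsBddMeasurable {X : Type*} [MeasurableSpace X] (f : X → ℂ) : Prop :=
  Measurable f ∧ ∃ C, ∀ ξ, ‖f ξ‖ ≤ C

/-- A measurable field of states. -/
def IsStateField {X F : Type*} [MeasurableSpace X] [NormedRing F] [StarRing F]
    [NormedAlgebra ℂ F] (φ : X → F →L[ℂ] ℂ) : Prop :=
  (∀ ξ, IsState (φ ξ)) ∧ ∀ A, Measurable fun ξ => φ ξ A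

/-- Equivariance (for a.e. ξ) of a field of states w.r.t. the spatial translations. -/
def Equivariant {X F : Type*} [MeasurableSpace X] [NormedRing F] [NormedAlgebra ℂ F]
    {d : ℕ} (ν : Measure X) (T : (Fin d → ℤ) → X → X) (α : (Fin d → ℤ) → F → F)
    (φ : X → F →L[ℂ] ℂ) : Prop :=
  ∀ᵐ ξ ∂ν, ∀ (x : Fin d → ℤ) (A : F), φ ξ (α x A) = φ (T (-x) ξ) A

/-- A measure-preserving ergodic action of `ℤ^d` on `(X, ν)`. -/
def ErgodicAction {X : Type*} [MeasurableSpace X] {d : ℕ} (ν : Measure X)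
    (T : (Fin d → ℤ) → X → X) : Prop :=
  (∀ x, MeasurePreserving (T x) ν ν) ∧ T 0 = id ∧ (∀ x y, T (x + y) = T x ∘ T y) ∧
    ∀ S : Set X, MeasurableSet S → (∀ x, T x ⁻¹' S = S) → ν S = 0 ∨ ν S = 1

/-- Weak clustering of a field of states w.r.t. the spatial translations. -/
def WeaklyClustering {X F : Type*} [MeasurableSpace X] [NormedRing F] [NormedAlgebra ℂ F]
    (d : ℕ) (ν : Measure X) (T : (Fin d → ℤ) → X → X) (α : (Fin d → ℤ) → F → F)
    (φ : X → F →L[ℂ] ℂ) : Prop :=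
  ∀ (A B : F) (f g : X → ℂ), IsBddMeasurable f → IsBddMeasurable g →
    Tendsto (fun N : ℕ => ((N : ℂ) ^ d)⁻¹ *
        ∑ x ∈ box d N, ∫ ξ, f ξ * g (T (-x) ξ) * φ ξ (A * α x B) ∂ν)
      atTop (nhds ((∫ ξ, f ξ * φ ξ A ∂ν) * (∫ ξ, g ξ * φ ξ B ∂ν)))

/-- Asymptotic abelianness of a field of states, w.r.t. a grading `σ`
(with `ε_{A,B} = −1` iff both `A`, `B` are odd, encoded by the two clauses). -/
def AsympAbelian {X F : Type*} [MeasurableSpace X] [NormedRing F] [NormedAlgebra ℂ F]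
    (d : ℕ) (ν : Measure X) (T : (Fin d → ℤ) → X → X) (α : (Fin d → ℤ) → F → F)
    (σ : F → F) (φ : X → F →L[ℂ] ℂ) : Prop :=
  ∀ A B : F, (σ A = A ∨ σ A = -A) → (σ B = B ∨ σ B = -B) → ∀ C D : F,
    ∀ f g h k : X → ℂ, IsBddMeasurable f → IsBddMeasurable g → IsBddMeasurable h →
      IsBddMeasurable k →
      (¬(σ A = -A ∧ σ B = -B) →
        Tendsto (fun x : Fin d → ℤ =>
            ∫ ξ, h ξ * f (T (-x) ξ) * g ξ * k ξ * φ ξ (C * (α x A * B - B * α x A) * D) ∂ν)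
          cofinite (nhds 0)) ∧
      ((σ A = -A ∧ σ B = -B) →
        Tendsto (fun x : Fin d → ℤ =>
            ∫ ξ, h ξ * f (T (-x) ξ) * g ξ * k ξ * φ ξ (C * (α x A * B + B * α x A) * D) ∂ν)
          cofinite (nhds 0))

/-- The β-KMS condition for a state `ψ` w.r.t. a one-parameter family `θ` of maps. -/
def IsKMS {F : Type*} [NormedRing F] [StarRing F] [NormedAlgebra ℂ F] (β : ℝ)
    (θ : ℝ → F → F) (ψ : F →L[ℂ] ℂ) : Prop :=
  ∀ A B : F, ∃ Φ : ℂ → ℂ,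
    ContinuousOn Φ {z : ℂ | z.im ∈ Set.Icc (min 0 β) (max 0 β)} ∧
    (∃ C, ∀ z ∈ {z : ℂ | z.im ∈ Set.Icc (min 0 β) (max 0 β)}, ‖Φ z‖ ≤ C) ∧
    (∀ z ∈ {z : ℂ | z.im ∈ Set.Ioo (min 0 β) (max 0 β)}, DifferentiableAt ℂ Φ z) ∧
    (∀ t : ℝ, Φ t = ψ (A * θ t B)) ∧
    (∀ t : ℝ, Φ (t + Complex.I * β) = ψ (θ t B * A))

/-- The field `{φ_ξ}` restricts to a β-KMS state on the set `Obs` of observables. -/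
def FieldKMS {X F : Type*} [MeasurableSpace X] [NormedRing F] [StarRing F]
    [NormedAlgebra ℂ F] (β : ℝ) (ν : Measure X) (τ : ℝ → X → F → F) (Obs : Set F)
    (φ : X → F →L[ℂ] ℂ) : Prop :=
  ∀ A ∈ Obs, ∀ B ∈ Obs, ∀ f : X → ℂ, IsBddMeasurable f →
    ∃ Φ : ℂ → ℂ,
      ContinuousOn Φ {z : ℂ | z.im ∈ Set.Icc (min 0 β) (max 0 β)} ∧
      (∃ C, ∀ z ∈ {z : ℂ | z.im ∈ Set.Icc (min 0 β) (max 0 β)}, ‖Φ z‖ ≤ C) ∧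
      (∀ z ∈ {z : ℂ | z.im ∈ Set.Ioo (min 0 β) (max 0 β)}, DifferentiableAt ℂ Φ z) ∧
      (∀ t : ℝ, Φ t = ∫ ξ, f ξ * φ ξ (A * τ t ξ B) ∂ν) ∧
      (∀ t : ℝ, Φ (t + Complex.I * β) = ∫ ξ, f ξ * φ ξ (τ t ξ B * A) ∂ν)


open Finset ComplexConjugate

section PositiveFunctional

variable {R : Type*} [Ring R] [StarRing R] [Algebra ℂ R] {φ : R →ₗ[ℂ] ℂ}

lemma im_map_star_mul_self (hφ : ∀ b, 0 ≤ φ (star b * b)) (b : R) :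
    (φ (star b * b)).im = 0 :=
  (Complex.nonneg_iff.1 (hφ b)).2.symm

variable [StarModule ℂ R]

lemma map_star_smul_one_add_mul_smul_one_add (c : ℂ) (b : R) :
    φ (star (c • 1 + b) * (c • 1 + b)) =
      conj c * c * φ 1 + conj c * φ b + c * φ (star b) + φ (star b * b) := by
  have h : star (c • (1 : R) + b) * (c • 1 + b) =
      (conj c * c) • (1 : R) + conj c • b + c • star b + star b * b := by
    simp only [star_add, star_smul, star_one, add_mul, mul_add, mul_smul_comm, smul_mul_assoc,
      mul_one, one_mul, starRingEnd_apply]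
    module
  simp only [h, map_add, map_smul, smul_eq_mul]

lemma map_star_of_nonneg (hφ : ∀ b, 0 ≤ φ (star b * b)) (b : R) :
    φ (star b) = conj (φ b) := by
  have h1 := im_map_star_mul_self hφ ((1 : ℂ) • 1 + b)
  have hI := im_map_star_mul_self hφ (Complex.I • 1 + b)
  have hone : (φ 1).im = 0 := by simpa using im_map_star_mul_self hφ 1
  rw [map_star_smul_one_add_mul_smul_one_add] at h1 hI
  simp only [map_one, mul_one, one_mul, Complex.add_im, hone, zero_add,
    im_map_star_mul_self hφ b, add_zero, Complex.conj_I, neg_mul, Complex.I_mul_I, neg_neg,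
    Complex.neg_im, Complex.mul_im, Complex.I_re, zero_mul, Complex.I_im] at h1 hI
  apply Complex.ext <;> simp <;> linarith

lemma normSq_map_le (hφ : ∀ b, 0 ≤ φ (star b * b)) (h1 : φ 1 = 1) (b : R) :
    Complex.normSq (φ b) ≤ (φ (star b * b)).re := by
  have h := (Complex.nonneg_iff.1 (hφ (-φ b • 1 + b))).1
  rw [map_star_smul_one_add_mul_smul_one_add, map_star_of_nonneg hφ, h1] at h
  have e : conj (-φ b) * -φ b * 1 + conj (-φ b) * φ b + -φ b * conj (φ b) + φ (star b * b) =
      φ (star b * b) - Complex.normSq (φ b) := by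
    rw [Complex.normSq_eq_conj_mul_self, map_neg]
    ring
  rw [e, Complex.sub_re, Complex.ofReal_re] at h
  linarith

end PositiveFunctional

section Averaging

variable {ι E : Type*} [AddCommGroup ι] [SeminormedAddCommGroup E] {G : ι → E}

lemma exists_sum_norm_comp_sub_le (hG : Tendsto G cofinite (𝓝 0)) {ε : ℝ} (hε : 0 < ε) :
    ∃ M, ∀ (S : Finset ι) (x : ι), ∑ y ∈ S, ‖G (y - x)‖ ≤ ε * #S + M := by
  classical
  have hF : {z | ¬‖G z‖ < ε}.Finite := by
    simpa [Metric.mem_ball, dist_zero_right] using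
      hG.eventually (Metric.ball_mem_nhds 0 hε)
  set F := hF.toFinset
  refine ⟨∑ z ∈ F, ‖G z‖, fun S x => ?_⟩
  rw [← sum_filter_not_add_sum_filter S (fun y => y - x ∈ F)]
  gcongr ?_ + ?_
  · calc ∑ y ∈ S with y - x ∉ F, ‖G (y - x)‖
        ≤ ∑ y ∈ S with y - x ∉ F, ε := sum_le_sum fun y hy =>
          (by simpa [F] using (mem_filter.1 hy).2 : ‖G (y - x)‖ < ε).le
      _ ≤ ∑ _ ∈ S, ε := sum_le_sum_of_subset_of_nonneg (filter_subset _ _) fun _ _ _ => hε.le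
      _ = ε * #S := by rw [sum_const, nsmul_eq_mul, mul_comm]
  · calc ∑ y ∈ S with y - x ∈ F, ‖G (y - x)‖
        = ∑ z ∈ (S.filter (fun y => y - x ∈ F)).image (· - x), ‖G z‖ := by
          rw [sum_image fun _ _ _ _ h => sub_left_injective h]
      _ ≤ ∑ z ∈ F, ‖G z‖ :=
          sum_le_sum_of_subset_of_nonneg (image_subset_iff.2 fun y hy => (mem_filter.1 hy).2)
            fun _ _ _ => norm_nonneg _

lemma exists_norm_sum_sum_sub_le (hG : Tendsto G cofinite (𝓝 0)) {ε : ℝ} (hε : 0 < ε) :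
    ∃ M, ∀ S : Finset ι, ‖∑ x ∈ S, ∑ y ∈ S, G (y - x)‖ ≤ ε * #S ^ 2 + M * #S := by
  obtain ⟨M, hM⟩ := exists_sum_norm_comp_sub_le hG hε
  refine ⟨M, fun S => ?_⟩
  calc ‖∑ x ∈ S, ∑ y ∈ S, G (y - x)‖ ≤ ∑ x ∈ S, ∑ y ∈ S, ‖G (y - x)‖ :=
        (norm_sum_le _ _).trans (sum_le_sum fun _ _ => norm_sum_le _ _)
    _ ≤ ∑ _ ∈ S, (ε * #S + M) := sum_le_sum fun x _ => hM S x
    _ = ε * #S ^ 2 + M * #S := by rw [sum_const, nsmul_eq_mul]; ring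

end Averaging

section InvariantState

variable {ι R : Type*} [AddCommGroup ι] [Ring R] [StarRing R] [Algebra ℂ R]
  {φ : R →ₗ[ℂ] ℂ} {α : ι → R ≃⋆ₐ[ℂ] R}

lemma map_star_mul_add_mul_star_of_invariant (hα : ∀ x y A, α (x + y) A = α x (α y A))
    (hinv : ∀ x A, φ (α x A) = φ A) (A : R) (x y : ι) :
    φ (star (α x A) * α y A) + φ (α y A * star (α x A)) =
      φ (α (y - x) A * star A + star A * α (y - x) A) := by
  rw [show α y A = α x (α (y - x) A) by rw [← hα, add_sub_cancel], ← map_star, ← map_mul,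
    ← map_mul, hinv, hinv, map_add, add_comm]

variable [StarModule ℂ R]

lemma card_sq_mul_normSq_le (hφ : ∀ b, 0 ≤ φ (star b * b)) (h1 : φ 1 = 1)
    (hα : ∀ x y A, α (x + y) A = α x (α y A)) (hinv : ∀ x A, φ (α x A) = φ A)
    (A : R) (S : Finset ι) :
    (#S : ℝ) ^ 2 * Complex.normSq (φ A) ≤
      ‖∑ x ∈ S, ∑ y ∈ S, φ (α (y - x) A * star A + star A * α (y - x) A)‖ := by
  set b := ∑ x ∈ S, α x A
  have hφb : φ b = #S * φ A := by
    simp only [b, map_sum, hinv, sum_const, nsmul_eq_mul]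
  have hsum : φ (star b * b) + φ (b * star b) =
      ∑ x ∈ S, ∑ y ∈ S, φ (α (y - x) A * star A + star A * α (y - x) A) := by
    simp only [b, star_sum, sum_mul_sum, map_sum]
    rw [sum_comm (s := S) (t := S) (f := fun y x => φ (α y A * star (α x A))), ← sum_add_distrib]
    refine sum_congr rfl fun x _ => ?_
    rw [← sum_add_distrib]
    exact sum_congr rfl fun y _ => map_star_mul_add_mul_star_of_invariant hα hinv A x y
  calc (#S : ℝ) ^ 2 * Complex.normSq (φ A) = Complex.normSq (φ b) := by
        rw [hφb, Complex.normSq_mul, Complex.normSq_natCast]; ring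
    _ ≤ (φ (star b * b)).re := normSq_map_le hφ h1 b
    _ ≤ (φ (star b * b) + φ (b * star b)).re := by
        simpa using (Complex.nonneg_iff.1 (hφ (star b))).1
    _ ≤ _ := hsum ▸ Complex.re_le_norm _

theorem map_eq_zero_of_tendsto_anticommutator [Infinite ι] (hφ : ∀ b, 0 ≤ φ (star b * b))
    (h1 : φ 1 = 1) (hα : ∀ x y A, α (x + y) A = α x (α y A)) (hinv : ∀ x A, φ (α x A) = φ A)
    {A : R} (hA : Tendsto (fun z => φ (α z A * star A + star A * α z A)) cofinite (𝓝 0)) :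
    φ A = 0 := by
  suffices h : ∀ ε > 0, Complex.normSq (φ A) ≤ ε by
    exact Complex.normSq_eq_zero.1 <|
      le_antisymm (le_of_forall_pos_le_add fun ε hε => by simpa using h ε hε)
        (Complex.normSq_nonneg _)
  intro ε hε
  obtain ⟨M, hM⟩ := exists_norm_sum_sum_sub_le hA (half_pos hε)
  obtain ⟨n, hn⟩ := exists_nat_gt (M / (ε / 2))
  obtain ⟨S, hS⟩ := Infinite.exists_subset_card_eq ι (n + 1)
  have hSpos : (0 : ℝ) < #S := by rw [hS]; positivity
  have hMS : M ≤ ε / 2 * #S := by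
    rw [hS, Nat.cast_succ, ← div_le_iff₀' (half_pos hε)]
    linarith
  refine le_of_mul_le_mul_left ?_ (pow_pos hSpos 2)
  calc (#S : ℝ) ^ 2 * Complex.normSq (φ A) ≤ ε / 2 * #S ^ 2 + M * #S :=
        (card_sq_mul_normSq_le hφ h1 hα hinv A S).trans (hM S)
    _ ≤ #S ^ 2 * ε := by nlinarith

end InvariantState

theorem statement1_general {d : ℕ} (hd : 1 ≤ d)
    {B : Type*} [NormedRing B] [StarRing B] [NormedAlgebra ℂ B]
    [StarModule ℂ B]
    (a : (Fin d → ℤ) → B ≃⋆ₐ[ℂ] B)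
    (haadd : ∀ x y A, a (x + y) A = a x (a y A))
    (s : B ≃⋆ₐ[ℂ] B) (hs : ∀ A, s (s A) = A)
    (φ : B →L[ℂ] ℂ) (hφ : IsState φ)
    (hinv : ∀ x A, φ (a x A) = φ A)
    (haa : ∀ A B' : B, (s A = A ∨ s A = -A) → (s B' = B' ∨ s B' = -B') → ∀ C D : B,
      (¬(s A = -A ∧ s B' = -B') →
        Tendsto (fun x : Fin d → ℤ => φ (C * (a x A * B' - B' * a x A) * D))
          cofinite (nhds 0)) ∧
      ((s A = -A ∧ s B' = -B') →
        Tendsto (fun x : Fin d → ℤ => φ (C * (a x A * B' + B' * a x A) * D))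
          cofinite (nhds 0))) :
    ∀ A : B, φ (s A) = φ A := by
  have : Nonempty (Fin d) := ⟨⟨0, hd⟩⟩
  intro A
  have hodd : s (A - s A) = -(A - s A) := by rw [map_sub, hs, neg_sub]
  have hodd_star : s (star (A - s A)) = -star (A - s A) := by rw [map_star, hodd, star_neg]
  have hanti := (haa _ _ (.inr hodd) (.inr hodd_star) 1 1).2 ⟨hodd, hodd_star⟩
  have hzero : φ (A - s A) = 0 :=
    map_eq_zero_of_tendsto_anticommutator (φ := (φ : B →ₗ[ℂ] ℂ)) hφ.2 hφ.1 haadd hinv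
      (by simpa only [ContinuousLinearMap.coe_coe, one_mul, mul_one] using hanti)
  rw [map_sub, sub_eq_zero] at hzero
  exact hzero.symm

/-- Every `𝔞`-invariant asymptotically abelian state `φ` of `𝔅` is even,
i.e. `φ ∘ 𝔰 = φ`. -/
theorem statement1 {d : ℕ} (hd : 1 ≤ d)
    {B : Type*} [NormedRing B] [StarRing B] [CStarRing B] [NormedAlgebra ℂ B]
    [StarModule ℂ B] [CompleteSpace B]
    (a : (Fin d → ℤ) → B ≃⋆ₐ[ℂ] B)
    (ha0 : ∀ A, a 0 A = A)
    (haadd : ∀ x y A, a (x + y) A = a x (a y A))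
    (s : B ≃⋆ₐ[ℂ] B) (hs : ∀ A, s (s A) = A)
    (hsa : ∀ x A, s (a x A) = a x (s A))
    (φ : B →L[ℂ] ℂ) (hφ : IsState φ)
    (hinv : ∀ x A, φ (a x A) = φ A)
    (haa : ∀ A B' : B, (s A = A ∨ s A = -A) → (s B' = B' ∨ s B' = -B') → ∀ C D : B,
      (¬(s A = -A ∧ s B' = -B') →
        Tendsto (fun x : Fin d → ℤ => φ (C * (a x A * B' - B' * a x A) * D))
          cofinite (nhds 0)) ∧
      ((s A = -A ∧ s B' = -B') →
        Tendsto (fun x : Fin d → ℤ => φ (C * (a x A * B' + B' * a x A) * D))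
          cofinite (nhds 0))) :
    ∀ A : B, φ (s A) = φ A :=
  statement1_general hd a haadd s hs φ hφ hinv haa
end

section
/- Let {φ_ξ}_{ξ∈X} be an equivariant measurable field of states on F, with the equivariance φ_ξ ∘ α_x = φ_{T_{−x}ξ} holding for all ξ ∈ X and x ∈ ℤ^d. For any closed subset V ⊆ G, the set X_V := {ξ ∈ X : there exists g ∈ V with φ_ξ ∘ γ_g = φ_ξ} is measurable with respect to the completion of ν, and ν(X_V) ∈ {0, 1}. -/
open Filter MeasureTheory Topology
open scoped ComplexOrder

/-!
`X_V` is invariant under the translations because equivariance moves `φ_ξ` to `φ_{T_{-x}ξ}`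
through the automorphism `α_x`, which commutes with every `γ_g`; ergodicity then gives
`ν(X_V) ∈ {0, 1}`. For measurability, compactness of `V` shows that `ξ ∈ X_V` iff for every
finite subset of a countable dense subset of `F`, points of a countable dense subset of `V` move
the values of `φ_ξ` on it arbitrarily little; this is a countable combination of measurable
conditions.
-/
theorem measurableSet_exists_mem_nonpos {X Y : Type*} [MeasurableSpace X] [TopologicalSpace Y]
    {K D : Set Y} (hK : IsCompact K) (hDc : D.Countable) (hDK : D ⊆ K) (hKD : K ⊆ closure D)
    {f : X → Y → ℝ} (hf_cont : ∀ ξ, Continuous (f ξ)) (hf_meas : ∀ y, Measurable (f · y)) :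
    MeasurableSet {ξ | ∃ y ∈ K, f ξ y ≤ 0} := by
  have hset : {ξ | ∃ y ∈ K, f ξ y ≤ 0} = ⋂ k : ℕ, ⋃ y ∈ D, {ξ | f ξ y < 1 / (k + 1)} := by
    ext ξ
    simp only [Set.mem_ofPred_eq, Set.mem_iInter, Set.mem_iUnion, exists_prop]
    constructor
    · rintro ⟨y, hyK, hy⟩ k
      obtain ⟨z, hz, hzD⟩ := mem_closure_iff.1 (hKD hyK) _
        (isOpen_lt (hf_cont ξ) continuous_const)
        (show f ξ y < 1 / (k + 1) from hy.trans_lt Nat.one_div_pos_of_nat)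
      exact ⟨z, hzD, hz⟩
    · intro h
      obtain ⟨y₀, hy₀D, -⟩ := h 0
      obtain ⟨y, hyK, hmin⟩ := hK.exists_isMinOn ⟨y₀, hDK hy₀D⟩ (hf_cont ξ).continuousOn
      refine ⟨y, hyK, le_of_forall_pos_lt_add fun ε hε => ?_⟩
      obtain ⟨k, hk⟩ := exists_nat_one_div_lt hε
      obtain ⟨z, hzD, hz⟩ := h k
      linarith [isMinOn_iff.1 hmin z (hDK hzD)]
  rw [hset]
  exact .iInter fun k => .biUnion hDc fun y _ => measurableSet_lt (hf_meas y) measurable_const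

theorem measurableSet_exists_mem_forall_eq_zero {X Y E ι : Type*} [MeasurableSpace X]
    [TopologicalSpace Y] [NormedAddCommGroup E] [MeasurableSpace E] [OpensMeasurableSpace E]
    [Countable ι] {K D : Set Y} (hK : IsCompact K) (hDc : D.Countable) (hDK : D ⊆ K)
    (hKD : K ⊆ closure D) {c : ι → X → Y → E} (hc_cont : ∀ i ξ, Continuous (c i ξ))
    (hc_meas : ∀ i y, Measurable (c i · y)) :
    MeasurableSet {ξ | ∃ y ∈ K, ∀ i, c i ξ y = 0} := by
  have hfinite : ∀ s : Finset ι, MeasurableSet {ξ | ∃ y ∈ K, ∑ i ∈ s, ‖c i ξ y‖ ≤ 0} :=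
    fun s => measurableSet_exists_mem_nonpos hK hDc hDK hKD
      (fun ξ => continuous_finsetSum _ fun i _ => (hc_cont i ξ).norm)
      (fun y => Finset.measurable_sum _ fun i _ => (hc_meas i y).norm)
  have hsum : ∀ s ξ y, ∑ i ∈ s, ‖c i ξ y‖ ≤ 0 ↔ ∀ i ∈ s, c i ξ y = 0 := fun s ξ y => by
    rw [(Finset.sum_nonneg fun i _ => norm_nonneg (c i ξ y)).ge_iff_eq',
      Finset.sum_eq_zero_iff_of_nonneg fun i _ => norm_nonneg _]
    simp only [norm_eq_zero]
  convert MeasurableSet.iInter hfinite using 1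
  ext ξ
  simp only [Set.mem_ofPred_eq, Set.mem_iInter, hsum]
  constructor
  · rintro ⟨y, hyK, hy⟩ s
    exact ⟨y, hyK, fun i _ => hy i⟩
  · intro h
    obtain ⟨y, hyK, hy⟩ := hK.inter_iInter_nonempty (fun i => {y | c i ξ y = 0})
      (fun i => isClosed_eq (hc_cont i ξ) continuous_const)
      fun s => by simpa [Set.Nonempty] using h s
    exact ⟨y, hyK, fun i => Set.mem_iInter.1 hy i⟩

def fixedLocus {X F G R : Type*} (φ : X → F → R) (γ : G → F → F) (V : Set G) : Set X :=
  {ξ | ∃ g ∈ V, ∀ A, φ ξ (γ g A) = φ ξ A}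

theorem preimage_fixedLocus {X F G R : Type*} {φ : X → F → R} {γ : G → F → F} (V : Set G)
    {τ : X → X} {a : F → F} (ha : Function.Surjective a) (hφa : ∀ ξ A, φ ξ (a A) = φ (τ ξ) A)
    (hγa : ∀ g A, γ g (a A) = a (γ g A)) :
    τ ⁻¹' fixedLocus φ γ V = fixedLocus φ γ V := by
  ext ξ
  refine exists_congr fun g => and_congr_right fun _ => ?_
  rw [Iff.comm, ha.forall]
  simp only [hγa, hφa]

theorem measurableSet_fixedLocus {X F G E : Type*} [MeasurableSpace X] [TopologicalSpace F]
    [TopologicalSpace.SeparableSpace F] [TopologicalSpace G]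
    [TopologicalSpace.PseudoMetrizableSpace G] [NormedAddCommGroup E] [MeasurableSpace E]
    [OpensMeasurableSpace E] [MeasurableSub₂ E] {φ : X → F → E} (hφ_cont : ∀ ξ, Continuous (φ ξ))
    (hφ_meas : ∀ A, Measurable (φ · A)) {γ : G → F → F} (hγ_cont : ∀ g, Continuous (γ g))
    (hγ_orbit_cont : ∀ A, Continuous (γ · A)) {V : Set G} (hV : IsCompact V) :
    MeasurableSet (fixedLocus φ γ V) := by
  obtain ⟨D, hDV, hDc, hVD⟩ := hV.isSeparable.exists_countable_dense_subset
  obtain ⟨S, hSc, hSd⟩ := TopologicalSpace.exists_countable_dense F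
  have := hSc.to_subtype
  have hset : fixedLocus φ γ V = {ξ | ∃ g ∈ V, ∀ A : S, φ ξ (γ g A) - φ ξ A = 0} := by
    ext ξ
    refine exists_congr fun g => and_congr_right fun _ => ?_
    simp only [sub_eq_zero, Subtype.forall]
    exact ⟨fun h A _ => h A, fun h A => congrFun
      (Continuous.ext_on hSd ((hφ_cont ξ).comp (hγ_cont g)) (hφ_cont ξ) h) A⟩
  rw [hset]
  exact measurableSet_exists_mem_forall_eq_zero hV hDc hDV hVD
    (fun A ξ => ((hφ_cont ξ).comp (hγ_orbit_cont A)).sub continuous_const)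
    (fun _ _ => (hφ_meas _).sub (hφ_meas _))

theorem statement9_general {d : ℕ} {X : Type*} [MeasurableSpace X] (ν : Measure X)
    {F : Type*} [NormedRing F] [StarRing F] [NormedAlgebra ℂ F] [TopologicalSpace.SeparableSpace F]
    (T : (Fin d → ℤ) → X → X) (hT : ErgodicAction ν T)
    (α : (Fin d → ℤ) → F ≃⋆ₐ[ℂ] F)
    {G : Type*} [TopologicalSpace G] [CompactSpace G] [TopologicalSpace.MetrizableSpace G]
    (γ : G → F ≃⋆ₐ[ℂ] F)
    (hγcont : Continuous fun p : G × F => γ p.1 p.2)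
    (hγα : ∀ g x A, γ g (α x A) = α x (γ g A))
    (φ : X → F →L[ℂ] ℂ) (hφ : IsStateField φ)
    (hequiv : ∀ (ξ : X) (x : Fin d → ℤ) (A : F), φ ξ (α x A) = φ (T (-x) ξ) A)
    (V : Set G) (hV : IsClosed V)
    (XV : Set X)
    (hXV : XV = {ξ : X | ∃ g ∈ V, ∀ A : F, φ ξ (γ g A) = φ ξ A}) :
    NullMeasurableSet XV ν ∧ (ν XV = 0 ∨ ν XV = 1) := by
  have hXV' : XV = fixedLocus (fun ξ => ⇑(φ ξ)) (fun g => ⇑(γ g)) V := hXV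
  have hmeas : MeasurableSet XV := hXV' ▸ measurableSet_fixedLocus (fun ξ => (φ ξ).continuous)
    hφ.2 (fun g => hγcont.comp (.prodMk_right g)) (fun A => hγcont.comp (.prodMk_left A))
    hV.isCompact
  have hinv : ∀ x, T x ⁻¹' XV = XV := fun x => hXV' ▸ preimage_fixedLocus V (α (-x)).surjective
    (fun ξ A => (hequiv ξ (-x) A).trans (by rw [neg_neg])) (fun g A => hγα g (-x) A)
  exact ⟨hmeas.nullMeasurableSet, hT.2.2.2 XV hmeas hinv⟩

/-- For an (everywhere) equivariant measurable field of states `{φ_ξ}` and a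
closed set `V ⊆ G`, the set `X_V = {ξ : ∃ g ∈ V, φ_ξ ∘ γ_g = φ_ξ}` is measurable w.r.t.
the completion of ν (null-measurable) and has measure 0 or 1. -/
theorem statement9 {d : ℕ} (hd : 1 ≤ d)
    {X : Type*} [TopologicalSpace X] [CompactSpace X] [TopologicalSpace.MetrizableSpace X]
    [MeasurableSpace X] [BorelSpace X]
    (ν : Measure X) [IsProbabilityMeasure ν]
    {F : Type*} [NormedRing F] [StarRing F] [CStarRing F] [NormedAlgebra ℂ F]
    [StarModule ℂ F] [CompleteSpace F] [TopologicalSpace.SeparableSpace F]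
    (T : (Fin d → ℤ) → X → X) (hT : ErgodicAction ν T)
    (α : (Fin d → ℤ) → F ≃⋆ₐ[ℂ] F)
    (hα0 : ∀ A, α 0 A = A) (hαadd : ∀ x y A, α (x + y) A = α x (α y A))
    {G : Type*} [Group G] [TopologicalSpace G] [IsTopologicalGroup G] [CompactSpace G]
    [TopologicalSpace.MetrizableSpace G]
    (γ : G → F ≃⋆ₐ[ℂ] F)
    (hγ1 : ∀ A, γ 1 A = A) (hγmul : ∀ g h A, γ (g * h) A = γ g (γ h A))
    (hγcont : Continuous fun p : G × F => γ p.1 p.2)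
    (hγα : ∀ g x A, γ g (α x A) = α x (γ g A))
    (φ : X → F →L[ℂ] ℂ) (hφ : IsStateField φ)
    (hequiv : ∀ (ξ : X) (x : Fin d → ℤ) (A : F), φ ξ (α x A) = φ (T (-x) ξ) A)
    (V : Set G) (hV : IsClosed V)
    (XV : Set X)
    (hXV : XV = {ξ : X | ∃ g ∈ V, ∀ A : F, φ ξ (γ g A) = φ ξ A}) :
    NullMeasurableSet XV ν ∧ (ν XV = 0 ∨ ν XV = 1) :=
  statement9_general ν T hT α γ hγcont hγα φ hφ hequiv V hV XV hXV
end

section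
/- Let {φ_ξ}_{ξ∈X} be an equivariant measurable field of states on F. Then there exist a closed subgroup G₁ ⊆ G and a ν-measurable set F₁ ⊆ X of full measure such that for every ξ ∈ F₁ the stabilizer G_{φ_ξ} := {g ∈ G : φ_ξ ∘ γ_g = φ_ξ} equals G₁; in particular, the stabilizer G_{φ_ξ} is ν-almost everywhere constant in ξ. -/
open Filter MeasureTheory Topology
open scoped ComplexOrder

/-! For almost every `ξ` the stabilizer of `φ ξ` is a closed subset of `G` that is constant along
the `T`-orbit of `ξ`, because `γ` commutes with `α`. Since `F` is separable and `G` is compact,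
for every member `K` of a countable network of compact subsets of `G` the set of `ξ` whose
stabilizer meets `K` is measurable, hence null or conull by ergodicity. Off a null set all
stabilizers therefore meet the same members of the network, and a closed set is determined by
the members of a network that it meets. -/

open Set TopologicalSpace

-- A network in the sense of general topology: like a base, but its members need not be open.
def IsNetwork {G : Type*} [TopologicalSpace G] (𝒦 : Set (Set G)) : Prop :=
  ∀ g, ∀ U ∈ 𝓝 g, ∃ K ∈ 𝒦, g ∈ K ∧ K ⊆ U

theorem IsNetwork.subset_of_forall_inter_nonempty {G : Type*} [TopologicalSpace G]
    {𝒦 : Set (Set G)} (h𝒦 : IsNetwork 𝒦) {C D : Set G} (hD : IsClosed D)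
    (hCD : ∀ K ∈ 𝒦, (C ∩ K).Nonempty → (D ∩ K).Nonempty) : C ⊆ D := by
  intro g hgC
  by_contra hgD
  obtain ⟨K, hK, hgK, hKD⟩ := h𝒦 g Dᶜ (hD.isOpen_compl.mem_nhds hgD)
  obtain ⟨x, hxD, hxK⟩ := hCD K hK ⟨g, hgC, hgK⟩
  exact hKD hxK hxD

theorem exists_countable_isNetwork_isCompact (G : Type*) [TopologicalSpace G] [CompactSpace G]
    [RegularSpace G] [SecondCountableTopology G] :
    ∃ 𝒦 : Set (Set G), 𝒦.Countable ∧ IsNetwork 𝒦 ∧ ∀ K ∈ 𝒦, IsCompact K := by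
  refine ⟨closure '' countableBasis G, (countable_countableBasis G).image _, fun g U hU => ?_,
    by rintro _ ⟨t, -, rfl⟩; exact isClosed_closure.isCompact⟩
  obtain ⟨t, ht, hgt, htU⟩ := (isBasis_countableBasis G).exists_closure_subset hU
  exact ⟨closure t, mem_image_of_mem _ ht, subset_closure hgt, htU⟩

theorem measurableSet_setOf_exists_mem_forall_eq_zero {X G E : Type*} [MeasurableSpace X]
    [TopologicalSpace G] [NormedAddCommGroup E] [MeasurableSpace E] [OpensMeasurableSpace E]
    {f : ℕ → X → G → E} (hf_cont : ∀ k ξ, Continuous (f k ξ))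
    (hf_meas : ∀ k g, Measurable fun ξ => f k ξ g) {K D : Set G} (hK : IsCompact K)
    (hD : D.Countable) (hDK : D ⊆ K) (hKD : K ⊆ closure D) :
    MeasurableSet {ξ | ∃ g ∈ K, ∀ k, f k ξ g = 0} := by
  have approx : {ξ | ∃ g ∈ K, ∀ k, f k ξ g = 0} =
      ⋂ j : ℕ, ⋃ g ∈ D, ⋂ k ≤ j, {ξ | ‖f k ξ g‖ < 1 / ((j : ℝ) + 1)} := by
    ext ξ
    simp only [mem_ofPred_eq, mem_iInter, mem_iUnion, exists_prop]
    constructor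
    · rintro ⟨a, haK, ha⟩ j
      have hU : IsOpen {g | ∀ k ≤ j, ‖f k ξ g‖ < 1 / ((j : ℝ) + 1)} := by
        simp only [← Finset.mem_range_succ_iff, ofPred_forall]
        exact isOpen_biInter_finset fun k _ =>
          isOpen_lt (hf_cont k ξ).norm continuous_const
      obtain ⟨g, hgU, hgD⟩ := mem_closure_iff.1 (hKD haK) _ hU fun k _ => by
        rw [ha k, norm_zero]; positivity
      exact ⟨g, hgD, hgU⟩
    · intro h
      choose g hgD hg using h
      -- a cluster point of the approximate zeros is an exact zero
      obtain ⟨a, haK, ha⟩ :=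
        hK (f := map g atTop) (tendsto_principal.2 (.of_forall fun j => hDK (hgD j)))
      refine ⟨a, haK, fun k => ?_⟩
      have hlim : Tendsto (fun j => f k ξ (g j)) atTop (𝓝 0) := by
        refine squeeze_zero_norm' ?_ tendsto_one_div_add_atTop_nhds_zero_nat
        filter_upwards [eventually_ge_atTop k] with j hj using (hg j k hj).le
      have hcl : MapClusterPt (f k ξ a) atTop (fun j => f k ξ (g j)) :=
        MapClusterPt.continuousAt_comp (hf_cont k ξ).continuousAt ha
      exact eq_of_nhds_neBot (ClusterPt.mono hcl hlim).neBot
  rw [approx]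
  exact .iInter fun j => .biUnion hD fun g _ => .iInter fun k => .iInter fun _ =>
    measurableSet_lt (hf_meas k g).norm measurable_const

theorem ErgodicAction.measure_eq_zero_or_one {X : Type*} [MeasurableSpace X] {d : ℕ}
    {ν : Measure X} {T : (Fin d → ℤ) → X → X} (hT : ErgodicAction ν T) {Q : Set X}
    (hQ : MeasurableSet Q) (hQ_inv : ∀ᵐ ξ ∂ν, ∀ y, T y ξ ∈ Q ↔ ξ ∈ Q) :
    ν Q = 0 ∨ ν Q = 1 := by
  obtain ⟨hT_mp, hT_zero, hT_add, hT_erg⟩ := hT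
  set S := {ξ | ∀ y, T y ξ ∈ Q}
  have hS : MeasurableSet S := by
    simp only [S, ofPred_forall]
    exact .iInter fun y => (hT_mp y).measurable hQ
  have hS_inv : ∀ x, T x ⁻¹' S = S := fun x => by
    ext ξ
    simp only [S, mem_preimage, mem_ofPred_eq, ← Function.comp_apply (f := T _), ← hT_add]
    exact ⟨fun h y => by simpa using h (y - x), fun h y => h _⟩
  have hSQ : S =ᵐ[ν] Q := eventuallyEq_set.2 <| hQ_inv.mono fun ξ hξ =>
    ⟨fun h => by simpa [hT_zero] using h 0, fun h y => (hξ y).2 h⟩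
  rw [← measure_congr hSQ]
  exact hT_erg S hS hS_inv

theorem ae_mem_iff_measure_eq_one {X : Type*} [MeasurableSpace X] {ν : Measure X}
    [IsProbabilityMeasure ν] {Q : Set X} (hQ : NullMeasurableSet Q ν)
    (h01 : ν Q = 0 ∨ ν Q = 1) : ∀ᵐ ξ ∂ν, ξ ∈ Q ↔ ν Q = 1 := by
  rcases h01 with h0 | h1
  · filter_upwards [measure_eq_zero_iff_ae_notMem.1 h0] with ξ hξ
    simp [hξ, h0]
  · filter_upwards [(ae_mem_iff_measure_eq hQ).2 (by simp [h1])] with ξ hξ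
    simp [hξ, h1]

theorem ErgodicAction.exists_forall_eq_of_isClosed {X G : Type*} [MeasurableSpace X]
    [TopologicalSpace G] {d : ℕ} {ν : Measure X} [IsProbabilityMeasure ν]
    {T : (Fin d → ℤ) → X → X} (hT : ErgodicAction ν T) {S : X → Set G}
    (hS_closed : ∀ ξ, IsClosed (S ξ)) (hS_inv : ∀ᵐ ξ ∂ν, ∀ y, S (T y ξ) = S ξ)
    {𝒦 : Set (Set G)} (h𝒦 : 𝒦.Countable) (h𝒦_net : IsNetwork 𝒦)
    (hS_meas : ∀ K ∈ 𝒦, MeasurableSet {ξ | (S ξ ∩ K).Nonempty}) :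
    ∃ F₁ : Set X, MeasurableSet F₁ ∧ ν F₁ = 1 ∧ ∀ ξ ∈ F₁, ∀ ξ' ∈ F₁, S ξ = S ξ' := by
  have hae : ∀ᵐ ξ ∂ν, ∀ K ∈ 𝒦, (S ξ ∩ K).Nonempty ↔ ν {ξ | (S ξ ∩ K).Nonempty} = 1 := by
    refine (ae_ball_iff h𝒦).2 fun K hK =>
      ae_mem_iff_measure_eq_one (hS_meas K hK).nullMeasurableSet ?_
    refine hT.measure_eq_zero_or_one (Q := {ξ | (S ξ ∩ K).Nonempty}) (hS_meas K hK)
      (hS_inv.mono fun ξ hξ y => ?_)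
    rw [mem_ofPred_eq, mem_ofPred_eq, hξ y]
  obtain ⟨F₁, hF₁_ae, hF₁, hF₁_const⟩ := hae.exists_measurable_mem
  have hsub : ∀ ξ ∈ F₁, ∀ ξ' ∈ F₁, S ξ ⊆ S ξ' := fun ξ hξ ξ' hξ' =>
    h𝒦_net.subset_of_forall_inter_nonempty (hS_closed ξ') fun K hK h =>
      (hF₁_const ξ' hξ' K hK).2 ((hF₁_const ξ hξ K hK).1 h)
  exact ⟨F₁, hF₁, (prob_compl_eq_zero_iff hF₁).1 (mem_ae_iff.1 hF₁_ae),
    fun ξ hξ ξ' hξ' => (hsub ξ hξ ξ' hξ').antisymm (hsub ξ' hξ' ξ hξ)⟩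

section StateStabilizer

variable {G F : Type*} [Group G] [NormedRing F] [StarRing F] [NormedAlgebra ℂ F]
  (γ : G → F ≃⋆ₐ[ℂ] F) (hγ1 : ∀ A, γ 1 A = A) (hγmul : ∀ g h A, γ (g * h) A = γ g (γ h A))

def stateStabilizer (ψ : F →L[ℂ] ℂ) : Subgroup G where
  carrier := {g | ∀ A, ψ (γ g A) = ψ A}
  one_mem' A := by rw [hγ1]
  mul_mem' {a b} ha hb A := by rw [hγmul, ha, hb]
  inv_mem' {a} ha A := by rw [← ha (γ a⁻¹ A), ← hγmul, mul_inv_cancel, hγ1]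

theorem mem_stateStabilizer {ψ : F →L[ℂ] ℂ} {g : G} :
    g ∈ stateStabilizer γ hγ1 hγmul ψ ↔ ∀ A, ψ (γ g A) = ψ A :=
  Iff.rfl

theorem isClosed_stateStabilizer [TopologicalSpace G] (hγ : ∀ A, Continuous fun g => γ g A)
    (ψ : F →L[ℂ] ℂ) : IsClosed (stateStabilizer γ hγ1 hγmul ψ : Set G) := by
  show IsClosed {g | ∀ A, ψ (γ g A) = ψ A}
  rw [ofPred_forall]
  exact isClosed_iInter fun A => isClosed_eq (ψ.continuous.comp (hγ A)) continuous_const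

theorem mem_stateStabilizer_iff_of_denseRange {ι : Type*} {A : ι → F} (hA : DenseRange A)
    {ψ : F →L[ℂ] ℂ} {g : G} (hg : Continuous (γ g)) :
    g ∈ stateStabilizer γ hγ1 hγmul ψ ↔ ∀ k, ψ (γ g (A k)) = ψ (A k) :=
  ⟨fun h k => h (A k), fun h =>
    congrFun (hA.equalizer (ψ.continuous.comp hg) ψ.continuous (funext h))⟩

theorem stateStabilizer_eq_of_eq_comp {ψ ψ' : F →L[ℂ] ℂ} (β : F ≃⋆ₐ[ℂ] F)
    (hβ : ∀ g A, γ g (β A) = β (γ g A)) (hψ : ∀ A, ψ' A = ψ (β A)) :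
    stateStabilizer γ hγ1 hγmul ψ' = stateStabilizer γ hγ1 hγmul ψ := by
  ext g
  simp only [mem_stateStabilizer, hψ, ← hβ]
  exact ⟨fun h B => by simpa using h (β.symm B), fun h A => h (β A)⟩

theorem measurableSet_setOf_stateStabilizer_inter_nonempty [TopologicalSpace G]
    [PseudoMetrizableSpace G] [SeparableSpace F] {X : Type*} [MeasurableSpace X]
    (hγ : Continuous fun p : G × F => γ p.1 p.2) {φ : X → F →L[ℂ] ℂ}
    (hφ : ∀ A, Measurable fun ξ => φ ξ A) {K : Set G} (hK : IsCompact K) :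
    MeasurableSet {ξ | ((stateStabilizer γ hγ1 hγmul (φ ξ) : Set G) ∩ K).Nonempty} := by
  obtain ⟨D, hDK, hD, hKD⟩ := hK.isSeparable.exists_countable_dense_subset
  obtain ⟨A, hA⟩ := exists_dense_seq F
  have hγ_apply (g : G) : Continuous (γ g) := hγ.comp (continuous_const.prodMk continuous_id)
  have hγ_orbit (B : F) : Continuous fun g => γ g B :=
    hγ.comp (continuous_id.prodMk continuous_const)
  convert measurableSet_setOf_exists_mem_forall_eq_zero
    (f := fun k ξ g => φ ξ (γ g (A k)) - φ ξ (A k))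
    (fun k ξ => ((φ ξ).continuous.comp (hγ_orbit (A k))).sub continuous_const)
    (fun k g => (hφ _).sub (hφ _)) hK hD hDK hKD using 2 with ξ
  simp only [SetLike.mem_coe, mem_stateStabilizer_iff_of_denseRange γ hγ1 hγmul hA (hγ_apply _),
    sub_eq_zero, Set.Nonempty, mem_inter_iff, and_comm]

end StateStabilizer

theorem statement10_general {d : ℕ}
    {X : Type*}
    [MeasurableSpace X]
    (ν : Measure X) [IsProbabilityMeasure ν]
    {F : Type*} [NormedRing F] [StarRing F] [NormedAlgebra ℂ F]
    [TopologicalSpace.SeparableSpace F]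
    (T : (Fin d → ℤ) → X → X) (hT : ErgodicAction ν T)
    (α : (Fin d → ℤ) → F ≃⋆ₐ[ℂ] F)
    {G : Type*} [Group G] [TopologicalSpace G] [CompactSpace G]
    [TopologicalSpace.MetrizableSpace G]
    (γ : G → F ≃⋆ₐ[ℂ] F)
    (hγ1 : ∀ A, γ 1 A = A) (hγmul : ∀ g h A, γ (g * h) A = γ g (γ h A))
    (hγcont : Continuous fun p : G × F => γ p.1 p.2)
    (hγα : ∀ g x A, γ g (α x A) = α x (γ g A))
    (φ : X → F →L[ℂ] ℂ) (hφ : IsStateField φ)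
    (hequiv : Equivariant ν T (fun x A => α x A) φ) :
    ∃ G₁ : Subgroup G, IsClosed (G₁ : Set G) ∧
      ∃ F₁ : Set X, MeasurableSet F₁ ∧ ν F₁ = 1 ∧
        ∀ ξ ∈ F₁, {g : G | ∀ A : F, φ ξ (γ g A) = φ ξ A} = (G₁ : Set G) := by
  set S : X → Set G := fun ξ => stateStabilizer γ hγ1 hγmul (φ ξ)
  have hS_closed (ξ : X) : IsClosed (S ξ) := isClosed_stateStabilizer γ hγ1 hγmul
    (fun A => hγcont.comp (continuous_id.prodMk continuous_const)) (φ ξ)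
  have hS_inv : ∀ᵐ ξ ∂ν, ∀ y, S (T y ξ) = S ξ := hequiv.mono fun ξ hξ y =>
    congrArg SetLike.coe <| stateStabilizer_eq_of_eq_comp γ hγ1 hγmul (α (-y))
      (fun g A => hγα g (-y) A) fun A => by simpa using (hξ (-y) A).symm
  obtain ⟨𝒦, h𝒦, h𝒦_net, h𝒦_compact⟩ := exists_countable_isNetwork_isCompact G
  obtain ⟨F₁, hF₁, hνF₁, hF₁_const⟩ :=
    hT.exists_forall_eq_of_isClosed hS_closed hS_inv h𝒦 h𝒦_net fun K hK =>
      measurableSet_setOf_stateStabilizer_inter_nonempty γ hγ1 hγmul hγcont hφ.2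
        (h𝒦_compact K hK)
  obtain ⟨ξ₀, hξ₀⟩ := nonempty_of_measure_ne_zero (hνF₁.trans_ne one_ne_zero)
  exact ⟨stateStabilizer γ hγ1 hγmul (φ ξ₀), hS_closed ξ₀, F₁, hF₁, hνF₁,
    fun ξ hξ => hF₁_const ξ hξ ξ₀ hξ₀⟩

/-- For an equivariant measurable field of states `{φ_ξ}`, the stabilizer
`G_{φ_ξ}` is ν-a.e. constant: there is a closed subgroup `G₁ ⊆ G` and a full-measure
measurable set `F₁` with `G_{φ_ξ} = G₁` for every `ξ ∈ F₁`. -/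
theorem statement10 {d : ℕ} (hd : 1 ≤ d)
    {X : Type*} [TopologicalSpace X] [CompactSpace X] [TopologicalSpace.MetrizableSpace X]
    [MeasurableSpace X] [BorelSpace X]
    (ν : Measure X) [IsProbabilityMeasure ν]
    {F : Type*} [NormedRing F] [StarRing F] [CStarRing F] [NormedAlgebra ℂ F]
    [StarModule ℂ F] [CompleteSpace F] [TopologicalSpace.SeparableSpace F]
    (T : (Fin d → ℤ) → X → X) (hT : ErgodicAction ν T)
    (α : (Fin d → ℤ) → F ≃⋆ₐ[ℂ] F)
    (hα0 : ∀ A, α 0 A = A) (hαadd : ∀ x y A, α (x + y) A = α x (α y A))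
    {G : Type*} [Group G] [TopologicalSpace G] [IsTopologicalGroup G] [CompactSpace G]
    [TopologicalSpace.MetrizableSpace G]
    (γ : G → F ≃⋆ₐ[ℂ] F)
    (hγ1 : ∀ A, γ 1 A = A) (hγmul : ∀ g h A, γ (g * h) A = γ g (γ h A))
    (hγcont : Continuous fun p : G × F => γ p.1 p.2)
    (hγα : ∀ g x A, γ g (α x A) = α x (γ g A))
    (φ : X → F →L[ℂ] ℂ) (hφ : IsStateField φ)
    (hequiv : Equivariant ν T (fun x A => α x A) φ) :
    ∃ G₁ : Subgroup G, IsClosed (G₁ : Set G) ∧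
      ∃ F₁ : Set X, MeasurableSet F₁ ∧ ν F₁ = 1 ∧
        ∀ ξ ∈ F₁, {g : G | ∀ A : F, φ ξ (γ g A) = φ ξ A} = (G₁ : Set G) :=
  statement10_general ν T hT α γ hγ1 hγmul hγcont hγα φ hφ hequiv
end

section
/- Let {φ_ξ}_{ξ∈X} be an equivariant measurable field of states on F. Then there exists a ν-measurable set F₀ ⊆ X of full measure such that for every ξ ∈ F₀ the stabilizer of the field, G_φ := {g ∈ G : for every A ∈ F, φ_ξ(γ_g(A)) = φ_ξ(A) for ν-a.e. ξ}, is contained in the stabilizer G_{φ_ξ} := {g ∈ G : φ_ξ ∘ γ_g = φ_ξ} of the individual state φ_ξ. -/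
open Filter MeasureTheory Topology
open scoped ComplexOrder

/-! The map `(g, A) ↦ φ_ξ(γ_g A) - φ_ξ(A)` is continuous on `G_φ × F`, which is separable
since `G` is compact metrizable and `F` is separable. The defining a.e. equalities of `G_φ`
at the countably many points of a dense subset therefore hold simultaneously off a single null
set, and by continuity they then hold at every point of `G_φ × F`. -/

open TopologicalSpace

theorem ae_eq_of_forall_ae_eq_of_separableSpace {X Y Z : Type*} [MeasurableSpace X]
    {μ : Measure X} [TopologicalSpace Y] [SeparableSpace Y] [TopologicalSpace Z] [T2Space Z]
    {u v : X → Y → Z} (hu : ∀ ξ, Continuous (u ξ)) (hv : ∀ ξ, Continuous (v ξ))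
    (h : ∀ y, ∀ᵐ ξ ∂μ, u ξ y = v ξ y) :
    ∀ᵐ ξ ∂μ, u ξ = v ξ := by
  obtain ⟨D, hDc, hDd⟩ := exists_countable_dense Y
  filter_upwards [(ae_ball_iff hDc).2 fun y _ => h y] with ξ hξ
  exact Continuous.ext_on hDd (hu ξ) (hv ξ) hξ

theorem exists_measurableSet_measure_eq_one_of_ae {X : Type*} [MeasurableSpace X]
    {μ : Measure X} [IsProbabilityMeasure μ] {p : X → Prop} (h : ∀ᵐ ξ ∂μ, p ξ) :
    ∃ s, MeasurableSet s ∧ μ s = 1 ∧ ∀ ξ ∈ s, p ξ := by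
  obtain ⟨s, hs, hsm, hsp⟩ := h.exists_measurable_mem
  exact ⟨s, hsm, (prob_compl_eq_zero_iff hsm).1 (mem_ae_iff.1 hs), hsp⟩

theorem statement11_general {X : Type*} [MeasurableSpace X] (ν : Measure X) [IsProbabilityMeasure ν]
    {F : Type*} [NormedRing F] [StarRing F] [NormedAlgebra ℂ F]
    [TopologicalSpace.SeparableSpace F]
    {G : Type*} [TopologicalSpace G] [CompactSpace G] [TopologicalSpace.MetrizableSpace G]
    (γ : G → F ≃⋆ₐ[ℂ] F) (hγcont : Continuous fun p : G × F => γ p.1 p.2)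
    (φ : X → F →L[ℂ] ℂ) (Gφ : Set G)
    (hGφ : Gφ = {g : G | ∀ A : F, ∀ᵐ ξ ∂ν, φ ξ (γ g A) = φ ξ A}) :
    ∃ F₀ : Set X, MeasurableSet F₀ ∧ ν F₀ = 1 ∧
      ∀ ξ ∈ F₀, Gφ ⊆ {g : G | ∀ A : F, φ ξ (γ g A) = φ ξ A} := by
  have hstab : ∀ᵐ ξ ∂ν, (fun p : Gφ × F => φ ξ (γ p.1 p.2)) = fun p => φ ξ p.2 :=
    ae_eq_of_forall_ae_eq_of_separableSpace
      (fun ξ => (φ ξ).continuous.comp (hγcont.comp (continuous_subtype_val.prodMap continuous_id)))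
      (fun ξ => (φ ξ).continuous.comp continuous_snd)
      (fun ⟨⟨g, hg⟩, A⟩ => by subst hGφ; exact hg A)
  obtain ⟨F₀, hF₀m, hF₀, hF₀stab⟩ := exists_measurableSet_measure_eq_one_of_ae hstab
  exact ⟨F₀, hF₀m, hF₀, fun ξ hξ g hg A => congrFun (hF₀stab ξ hξ) (⟨g, hg⟩, A)⟩

/-- For an equivariant measurable field of states `{φ_ξ}`, there is a
full-measure measurable set `F₀` such that for every `ξ ∈ F₀` the stabilizer `G_φ` of the
field is contained in the stabilizer `G_{φ_ξ}` of the individual state. -/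
theorem statement11 {d : ℕ} (hd : 1 ≤ d)
    {X : Type*} [TopologicalSpace X] [CompactSpace X] [TopologicalSpace.MetrizableSpace X]
    [MeasurableSpace X] [BorelSpace X]
    (ν : Measure X) [IsProbabilityMeasure ν]
    {F : Type*} [NormedRing F] [StarRing F] [CStarRing F] [NormedAlgebra ℂ F]
    [StarModule ℂ F] [CompleteSpace F] [TopologicalSpace.SeparableSpace F]
    (T : (Fin d → ℤ) → X → X) (hT : ErgodicAction ν T)
    (α : (Fin d → ℤ) → F ≃⋆ₐ[ℂ] F)
    (hα0 : ∀ A, α 0 A = A) (hαadd : ∀ x y A, α (x + y) A = α x (α y A))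
    {G : Type*} [Group G] [TopologicalSpace G] [IsTopologicalGroup G] [CompactSpace G]
    [TopologicalSpace.MetrizableSpace G]
    (γ : G → F ≃⋆ₐ[ℂ] F)
    (hγ1 : ∀ A, γ 1 A = A) (hγmul : ∀ g h A, γ (g * h) A = γ g (γ h A))
    (hγcont : Continuous fun p : G × F => γ p.1 p.2)
    (hγα : ∀ g x A, γ g (α x A) = α x (γ g A))
    (φ : X → F →L[ℂ] ℂ) (hφ : IsStateField φ)
    (hequiv : Equivariant ν T (fun x A => α x A) φ)
    (Gφ : Set G)
    (hGφ : Gφ = {g : G | ∀ A : F, ∀ᵐ ξ ∂ν, φ ξ (γ g A) = φ ξ A}) :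
    ∃ F₀ : Set X, MeasurableSet F₀ ∧ ν F₀ = 1 ∧
      ∀ ξ ∈ F₀, Gφ ⊆ {g : G | ∀ A : F, φ ξ (γ g A) = φ ξ A} :=
  statement11_general ν γ hγcont φ Gφ hGφ
end
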